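/- arXiv:math/9801132 — 4 statements merged into one kernel-verified Lean document; each statement's English description precedes it below -/
import Mathlib

section
/- Let p ≥ 2 be an integer that is not prime, not twice an odd prime, and not equal to 4 or 9. Then the number of squares modulo p is strictly less than ⌊p/2⌋. -/
/-- The number of squares in `ZMod m`. -/
noncomputable def numSquares (m : ℕ) : ℕ :=
  Nat.card (Set.range fun x : ZMod m => x ^ 2)

lemma numSquares_eq (m : ℕ) [NeZero m] :
    numSquares m = (Finset.image (fun x : ZMod m => x ^ 2) Finset.univ).card := by
  rw [numSquares, Nat.card_eq_card_toFinset, Set.toFinset_range]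

lemma numSquares_mul {a b : ℕ} (h : Nat.Coprime a b) :
    numSquares (a * b) = numSquares a * numSquares b := by
  unfold numSquares
  have e := (ZMod.chineseRemainder h).toRingHom
  set E := ZMod.chineseRemainder h with hE
  have h1 : Nat.card (Set.range fun x : ZMod (a*b) => x ^ 2)
      = Nat.card (E '' (Set.range fun x : ZMod (a*b) => x ^ 2)) :=
    (Nat.card_image_of_injective E.injective _).symm
  have h2 : E '' (Set.range fun x : ZMod (a*b) => x ^ 2)
      = Set.range (fun y : ZMod a × ZMod b => y ^ 2) := by
    ext y
    constructor
    · rintro ⟨z, ⟨x, rfl⟩, rfl⟩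
      exact ⟨E x, by rw [map_pow]⟩
    · rintro ⟨x, rfl⟩
      exact ⟨(E.symm x) ^ 2, ⟨E.symm x, rfl⟩, by rw [map_pow, RingEquiv.apply_symm_apply]⟩
  have h3 : Set.range (fun y : ZMod a × ZMod b => y ^ 2)
      = (Set.range fun x : ZMod a => x ^ 2) ×ˢ (Set.range fun x : ZMod b => x ^ 2) := by
    ext ⟨y1, y2⟩
    simp only [Set.mem_range, Set.mem_prod, Prod.pow_def, Prod.mk.injEq, Prod.exists]
    constructor
    · rintro ⟨x1, x2, h1, h2⟩; exact ⟨⟨x1, h1⟩, ⟨x2, h2⟩⟩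
    · rintro ⟨⟨x1, h1⟩, ⟨x2, h2⟩⟩; exact ⟨x1, x2, h1, h2⟩
  rw [h1, h2, h3]
  rw [Nat.card_congr (Equiv.Set.prod _ _), Nat.card_prod]

lemma numSquares_le_of_dvd {d m : ℕ} (hd : d ∣ m) (hm : 0 < m) :
    numSquares m ≤ (m / d) * numSquares d := by
  have hd0 : 0 < d := Nat.pos_of_dvd_of_pos hd hm
  haveI : NeZero m := ⟨hm.ne'⟩
  haveI : NeZero d := ⟨hd0.ne'⟩
  have hmd : 0 < m / d := Nat.div_pos (Nat.le_of_dvd hm hd) hd0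
  haveI : NeZero (m / d) := ⟨hmd.ne'⟩
  rw [numSquares_eq, numSquares_eq]
  set f : ZMod m →+* ZMod d := ZMod.castHom hd (ZMod d) with hf
  set S : Finset (ZMod d) := Finset.image (fun x : ZMod d => x ^ 2) Finset.univ with hS
  -- the injection
  have hvaldiv : ∀ x : ZMod m, x.val / d < m / d := fun x =>
    Nat.div_lt_div_of_lt_of_dvd hd (ZMod.val_lt x)
  set F : ZMod m → ZMod d × Fin (m / d) := fun x => (f x, ⟨x.val / d, hvaldiv x⟩) with hFdef
  have hfval : ∀ x : ZMod m, (f x).val = x.val % d := by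
    intro x
    have : f x = ((x.val : ℕ) : ZMod d) := by
      rw [hf, ZMod.castHom_apply, ← ZMod.natCast_val]
    rw [this, ZMod.val_natCast]
  have hFinj : Function.Injective F := by
    intro x y hxy
    simp only [hFdef, Prod.mk.injEq, Fin.mk.injEq] at hxy
    have h1 : (f x).val = (f y).val := congrArg ZMod.val hxy.1
    have h2 : x.val / d = y.val / d := hxy.2
    rw [hfval, hfval] at h1
    have : x.val = y.val := by
      rw [← Nat.div_add_mod x.val d, ← Nat.div_add_mod y.val d, h1, h2]
    exact ZMod.val_injective m this
  calc (Finset.image (fun x : ZMod m => x ^ 2) Finset.univ).card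
      ≤ (S ×ˢ (Finset.univ : Finset (Fin (m/d)))).card := by
        apply Finset.card_le_card_of_injOn F
        · rintro z hz
          obtain ⟨x, -, rfl⟩ := Finset.mem_image.mp hz
          refine Finset.mem_product.mpr ⟨?_, Finset.mem_univ _⟩
          refine Finset.mem_image.mpr ⟨f x, Finset.mem_univ _, ?_⟩
          simp [hFdef, map_pow]
        · exact fun a _ b _ h => hFinj h
    _ = (m / d) * S.card := by
        rw [Finset.card_product]
        simp [mul_comm]

lemma fiber_bound {m : ℕ} [NeZero m] (hodd : Odd m) :
    2 * numSquares m + (Finset.univ.filter fun x : ZMod m => x ^ 2 = 0).card ≤ m + 2 := by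
  rw [numSquares_eq]
  set I : Finset (ZMod m) := Finset.image (fun x : ZMod m => x ^ 2) Finset.univ with hI
  have hsum : (Finset.univ : Finset (ZMod m)).card
      = ∑ b ∈ I, (Finset.univ.filter fun x : ZMod m => x ^ 2 = b).card :=
    Finset.card_eq_sum_card_fiberwise (fun x _ => Finset.mem_image_of_mem _ (Finset.mem_univ x))
  have hcard : (Finset.univ : Finset (ZMod m)).card = m := by
    simp [ZMod.card]
  have h0 : (0 : ZMod m) ∈ I := Finset.mem_image.mpr ⟨0, Finset.mem_univ _, by ring⟩
  have hsplit : ∑ b ∈ I, (Finset.univ.filter fun x : ZMod m => x ^ 2 = b).card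
      = (Finset.univ.filter fun x : ZMod m => x ^ 2 = 0).card
        + ∑ b ∈ I.erase 0, (Finset.univ.filter fun x : ZMod m => x ^ 2 = b).card :=
    (Finset.add_sum_erase I _ h0).symm
  have hfib : ∀ b ∈ I.erase 0, 2 ≤ (Finset.univ.filter fun x : ZMod m => x ^ 2 = b).card := by
    intro b hb
    obtain ⟨hb0, hbI⟩ := Finset.mem_erase.mp hb
    obtain ⟨x, -, hx⟩ := Finset.mem_image.mp hbI
    have hxne : x ≠ -x := by
      intro hxx
      have h2 : (2 : ZMod m) * x = 0 := by
        rw [two_mul]; nth_rewrite 2 [hxx]; ring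
      have hu : IsUnit (2 : ZMod m) := by
        have := (ZMod.isUnit_iff_coprime 2 m).mpr
          ((Nat.coprime_two_left).mpr hodd)
        simpa using this
      have hx0 : x = 0 := by
        have := hu.mul_right_eq_zero.mp h2
        exact this
      apply hb0
      rw [← hx, hx0]; ring
    have hsub : ({x, -x} : Finset (ZMod m)) ⊆ Finset.univ.filter fun y : ZMod m => y ^ 2 = b := by
      intro y hy
      rcases Finset.mem_insert.mp hy with rfl | hy
      · exact Finset.mem_filter.mpr ⟨Finset.mem_univ _, hx⟩
      · rw [Finset.mem_singleton.mp hy]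
        exact Finset.mem_filter.mpr ⟨Finset.mem_univ _, by rw [neg_pow, ← hx]; ring⟩
    calc 2 = ({x, -x} : Finset (ZMod m)).card := (Finset.card_pair hxne).symm
      _ ≤ _ := Finset.card_le_card hsub
  have hge : ∑ b ∈ I.erase 0, (Finset.univ.filter fun x : ZMod m => x ^ 2 = b).card
      ≥ 2 * (I.card - 1) := by
    calc ∑ b ∈ I.erase 0, (Finset.univ.filter fun x : ZMod m => x ^ 2 = b).card
        ≥ ∑ _b ∈ I.erase 0, 2 := Finset.sum_le_sum hfib
      _ = 2 * (I.card - 1) := by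
          rw [Finset.sum_const, Finset.card_erase_of_mem h0]; ring
  have hIpos : 1 ≤ I.card := Finset.card_pos.mpr ⟨0, h0⟩
  omega

lemma pair_bound {m : ℕ} (hodd : Odd m) (h1 : 0 < m) :
    2 * numSquares m ≤ m + 1 := by
  haveI : NeZero m := ⟨h1.ne'⟩
  have h := fiber_bound hodd
  have h0 : (0 : ZMod m) ∈ Finset.univ.filter fun x : ZMod m => x ^ 2 = 0 :=
    Finset.mem_filter.mpr ⟨Finset.mem_univ _, by ring⟩
  have := Finset.card_pos.mpr ⟨(0 : ZMod m), h0⟩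
  omega

lemma sq_bound {q : ℕ} (hq : q.Prime) (hodd : Odd q) :
    2 * numSquares (q ^ 2) + q ≤ q ^ 2 + 2 := by
  have hq1 : 1 < q := hq.one_lt
  haveI : NeZero (q ^ 2) := ⟨by positivity⟩
  have h := fiber_bound (m := q ^ 2) (hodd.pow)
  have hcard : q ≤ (Finset.univ.filter fun x : ZMod (q ^ 2) => x ^ 2 = 0).card := by
    have := Finset.card_le_card_of_injOn
      (f := fun i : Fin q => ((q * i : ℕ) : ZMod (q ^ 2)))
      (s := Finset.univ) (t := Finset.univ.filter fun x : ZMod (q ^ 2) => x ^ 2 = 0)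
      ?_ ?_
    · simpa using this
    · intro i _
      refine Finset.mem_filter.mpr ⟨Finset.mem_univ _, ?_⟩
      push_cast
      rw [mul_pow, ← Nat.cast_pow]
      rw [ZMod.natCast_self]
      ring
    · intro i _ j _ hij
      have hlt : ∀ k : Fin q, q * (k : ℕ) < q ^ 2 := by
        intro k
        calc q * (k : ℕ) < q * q := Nat.mul_lt_mul_of_le_of_lt le_rfl k.2 (by omega)
          _ = q ^ 2 := (sq q).symm
      have := congrArg ZMod.val hij
      rw [ZMod.val_natCast, ZMod.val_natCast, Nat.mod_eq_of_lt (hlt i),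
        Nat.mod_eq_of_lt (hlt j)] at this
      have : (i : ℕ) = j := Nat.eq_of_mul_eq_mul_left (by omega) this
      exact Fin.ext this
  omega

lemma odd_of_dvd_odd {e b : ℕ} (h : e ∣ b) (hodd : Odd b) : Odd e := by
  rcases Nat.even_or_odd e with he | he
  · exfalso
    have h2 : 2 ∣ b := dvd_trans he.two_dvd h
    exact (Nat.not_odd_iff_even.mpr ((even_iff_two_dvd).mpr h2)) hodd
  · exact he

lemma odd_composite_bound {b : ℕ} (hb : 1 < b) (hodd : Odd b) (hnp : ¬ b.Prime) :
    2 * numSquares b + 1 ≤ b ∧ (b ≠ 9 → 2 * numSquares b + 3 ≤ b) := by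
  have hb0 : b ≠ 0 := by omega
  set q := b.minFac with hq
  have hqp : q.Prime := Nat.minFac_prime (by omega)
  have hqdvd : q ∣ b := Nat.minFac_dvd b
  have hqodd : Odd q := odd_of_dvd_odd hqdvd hodd
  have hq3 : 3 ≤ q := by
    have := hqp.two_le
    rcases Nat.odd_iff.mp hqodd with h
    omega
  set j := b.factorization q with hj
  have hj1 : 1 ≤ j := hqp.factorization_pos_of_dvd hb0 hqdvd
  set e := b / q ^ j with he
  have hbe : q ^ j * e = b := Nat.ordProj_mul_ordCompl_eq_self b q
  have hcop : Nat.Coprime (q ^ j) e :=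
    Nat.Coprime.pow_left _ (Nat.coprime_ordCompl hqp hb0)
  have heodd : Odd e := odd_of_dvd_odd ⟨q ^ j, by rw [← hbe]; ring⟩ hodd
  clear_value q j e
  by_cases he1 : e = 1
  · -- prime power case : b = q ^ j
    rw [he1, mul_one] at hbe
    have hj2 : 2 ≤ j := by
      have : j ≠ 1 := fun h1 => hnp (by rw [← hbe, h1, pow_one]; exact hqp)
      omega
    set t := q ^ (j - 2) with ht
    have ht1 : 1 ≤ t := Nat.one_le_pow _ _ (by omega)
    have hdvd : q ^ 2 ∣ b := by rw [← hbe]; exact pow_dvd_pow q hj2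
    have hdivq : b / q ^ 2 = t := by
      rw [← hbe, ht, Nat.pow_div hj2 (by omega)]
    have hA := numSquares_le_of_dvd hdvd (by omega)
    rw [hdivq] at hA
    have hsq := sq_bound hqp hqodd
    -- 2 * numSquares b + t * q ≤ b + 2 * t
    have hkey : 2 * numSquares b + t * q ≤ b + 2 * t := by
      calc 2 * numSquares b + t * q ≤ 2 * (t * numSquares (q ^ 2)) + t * q := by omega
        _ = t * (2 * numSquares (q ^ 2) + q) := by ring
        _ ≤ t * (q ^ 2 + 2) := Nat.mul_le_mul_left t hsq
        _ = t * q ^ 2 + 2 * t := by ring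
        _ = b + 2 * t := by
            rw [← hbe, ht, ← pow_add]
            congr 2
            omega
    constructor
    · have h3t : 3 * t ≤ t * q := by
        rw [mul_comm 3 t]; exact Nat.mul_le_mul_left t hq3
      omega
    · intro hb9
      rcases Nat.lt_or_ge q 5 with hq5 | hq5
      · -- q = 3 (since 3 ≤ q < 5, prime, odd → q = 3)
        have hq3' : q = 3 := by
          rcases Nat.odd_iff.mp hqodd with h; omega
        have hj3 : 3 ≤ j := by
          rcases Nat.lt_or_ge j 3 with h | h
          · exfalso; apply hb9; rw [← hbe, hq3']
            interval_cases j <;> norm_num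
          · exact h
        have ht3 : 3 ≤ t := by
          rw [ht]
          calc 3 = q ^ 1 := by rw [hq3', pow_one]
            _ ≤ q ^ (j - 2) := Nat.pow_le_pow_right (by omega) (by omega)
        have h3t : 3 * t ≤ t * q := by
          rw [mul_comm 3 t]; exact Nat.mul_le_mul_left t hq3
        omega
      · have h5t : 5 * t ≤ t * q := by
          rw [mul_comm 5 t]; exact Nat.mul_le_mul_left t hq5
        omega
  · -- split case
    set c := q ^ j with hc
    have hc3 : 3 ≤ c := le_trans hq3 (by
      calc q = q ^ 1 := (pow_one q).symm
        _ ≤ q ^ j := Nat.pow_le_pow_right (by omega) hj1)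
    have hcodd : Odd c := hqodd.pow
    have he3 : 3 ≤ e := by
      rcases Nat.odd_iff.mp heodd with h
      omega
    have hce : c ≠ e := by
      intro h
      have hcop' : c.Coprime e := hcop
      rw [h] at hcop'
      have : e = 1 := (Nat.coprime_self e).mp hcop'
      omega
    have hmul : numSquares b = numSquares c * numSquares e := by
      rw [← hbe, numSquares_mul hcop]
    have hpc := pair_bound hcodd (by omega)
    have hpe := pair_bound heodd (by omega)
    have h4 : 4 * numSquares b ≤ (c + 1) * (e + 1) := by
      calc 4 * numSquares b = (2 * numSquares c) * (2 * numSquares e) := by rw [hmul]; ring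
        _ ≤ (c + 1) * (e + 1) := Nat.mul_le_mul hpc hpe
    have hbig : c + e + 7 ≤ c * e := by
      have h5 : 5 ≤ c ∨ 5 ≤ e := by
        rcases Nat.odd_iff.mp hcodd with h1
        rcases Nat.odd_iff.mp heodd with h2
        omega
      rcases h5 with h5 | h5
      · nlinarith
      · nlinarith
    have hexp : (c + 1) * (e + 1) = c * e + c + e + 1 := by ring
    have hbb : b = c * e := hbe.symm
    constructor <;> [skip; intro _] <;> omega

theorem numSquares_lt_of_not_prime_not_twice_prime (p : ℕ) (hp : 2 ≤ p)
    (h₁ : ¬ p.Prime) (h₂ : ¬ ∃ s : ℕ, s.Prime ∧ Odd s ∧ p = 2 * s)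
    (h₃ : p ≠ 4) (h₄ : p ≠ 9) :
    numSquares p < p / 2 := by
  have hp0 : p ≠ 0 := by omega
  set k := p.factorization 2 with hk
  set b := p / 2 ^ k with hbdef
  have hpb : 2 ^ k * b = p := Nat.ordProj_mul_ordCompl_eq_self p 2
  have hbodd : Odd b := by
    have hnd : ¬ 2 ∣ b := Nat.not_dvd_ordCompl Nat.prime_two hp0
    rw [Nat.odd_iff]
    omega
  have hcop : Nat.Coprime (2 ^ k) b :=
    Nat.Coprime.pow_left _ (Nat.coprime_ordCompl Nat.prime_two hp0)
  clear_value k b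
  have hb1 : 1 ≤ b := by
    rcases Nat.eq_zero_or_pos b with h | h
    · rw [h, mul_zero] at hpb; omega
    · exact h
  rcases Nat.lt_or_ge k 2 with hk2 | hk2
  · interval_cases k
    · -- k = 0 : p odd
      rw [pow_zero, one_mul] at hpb
      subst hpb
      obtain ⟨-, hM⟩ := odd_composite_bound (by omega) hbodd h₁
      have := hM h₄
      omega
    · -- k = 1 : p = 2 * b
      rw [pow_one] at hpb
      have hbne1 : b ≠ 1 := by
        intro h
        rw [h, mul_one] at hpb
        exact h₁ (hpb ▸ Nat.prime_two)
      have hbnp : ¬ b.Prime := fun hbp => h₂ ⟨b, hbp, hbodd, hpb.symm⟩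
      obtain ⟨hM, -⟩ := odd_composite_bound (by omega) hbodd hbnp
      have hs2 : numSquares 2 = 2 := by rw [numSquares_eq]; decide
      have hmul : numSquares p = 2 * numSquares b := by
        rw [← hpb, numSquares_mul (by simpa using hbodd.coprime_two_left), hs2]
      omega
  · -- k ≥ 2
    rcases eq_or_ne b 1 with hb1' | hb1'
    · -- p = 2 ^ k, k ≥ 3
      rw [hb1', mul_one] at hpb
      have hk3 : 3 ≤ k := by
        have : k ≠ 2 := by
          intro h
          rw [h] at hpb
          norm_num at hpb
          omega
        omega
      set t := 2 ^ (k - 3) with ht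
      have ht1 : 1 ≤ t := Nat.one_le_two_pow
      have hpt : p = t * 8 := by
        rw [← hpb, ht, show (8:ℕ) = 2 ^ 3 from rfl, ← pow_add]
        congr 1
        omega
      have h8 : (8 : ℕ) ∣ p := ⟨t, by omega⟩
      have hdiv : p / 8 = t := by rw [hpt]; omega
      have hs8 : numSquares 8 = 3 := by rw [numSquares_eq]; decide
      have hA := numSquares_le_of_dvd h8 (by omega)
      rw [hdiv, hs8] at hA
      omega
    · -- p = 2 ^ k * b, b ≥ 3
      have hb3 : 3 ≤ b := by
        rcases Nat.odd_iff.mp hbodd with h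
        omega
      set t := 2 ^ (k - 2) with ht
      have ht1 : 1 ≤ t := Nat.one_le_two_pow
      have hpt : 2 ^ k = t * 4 := by
        rw [ht, show (4:ℕ) = 2 ^ 2 from rfl, ← pow_add]
        congr 1
        omega
      have h4dvd : (4 : ℕ) ∣ 2 ^ k := ⟨t, by omega⟩
      have hdiv4 : 2 ^ k / 4 = t := by rw [hpt]; omega
      have hs4 : numSquares 4 = 2 := by rw [numSquares_eq]; decide
      have hA := numSquares_le_of_dvd h4dvd (by positivity)
      rw [hdiv4, hs4] at hA
      have hmul : numSquares p = numSquares (2 ^ k) * numSquares b := by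
        rw [← hpb, numSquares_mul hcop]
      have hpe := pair_bound hbodd (by omega)
      set u := t * b with hu
      have hu3 : 3 * t ≤ u := by rw [hu, mul_comm 3 t]; exact Nat.mul_le_mul_left t hb3
      have hpu : p = 4 * u := by rw [← hpb, hpt, hu]; ring
      have h2 : 2 * numSquares p ≤ 2 * u + 2 * t := by
        calc 2 * numSquares p = 2 * (numSquares (2 ^ k) * numSquares b) := by rw [hmul]
          _ ≤ 2 * ((t * 2) * numSquares b) :=
              Nat.mul_le_mul_left 2 (Nat.mul_le_mul_right _ hA)
          _ = (2 * t) * (2 * numSquares b) := by ring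
          _ ≤ (2 * t) * (b + 1) := Nat.mul_le_mul_left _ hpe
          _ = 2 * u + 2 * t := by rw [hu]; ring
      omega
end

section
/- Let s be an odd prime, p = 2s, q coprime to p, and c an integer. Then the generalized Gauss sum Σ_{n=0}^{2s-1} ξ_{2s}^(q s n² + c n) equals 0 if gcd(c,s) = 1 and equals 2s if c ≡ s (mod 2s). -/
open Complex Finset

/-- Generalized quadratic Gauss sum `G_p(a,b) = Σ_{n=0}^{p-1} e^{2πi(an²+bn)/p}`. -/
noncomputable def gaussSumG (p : ℕ) (a b : ℤ) : ℂ :=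
  ∑ n ∈ Finset.range p,
    Complex.exp (2 * Real.pi * Complex.I * ((a : ℂ) * (n : ℂ) ^ 2 + (b : ℂ) * n) / p)

theorem gaussSum_twice_odd_prime (s : ℕ) (hs : s.Prime) (hso : Odd s)
    (q : ℤ) (hq : Int.gcd q (2 * s) = 1) (c : ℤ) :
    (Int.gcd c s = 1 → gaussSumG (2 * s) (q * s) c = 0) ∧
    (c ≡ (s : ℤ) [ZMOD (2 * s : ℤ)] → gaussSumG (2 * s) (q * s) c = (2 * s : ℂ)) := by
  have hs0 : s ≠ 0 := hs.ne_zero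
  set N : ℕ := 2 * s with hN
  have hN0 : N ≠ 0 := by simp [hN, hs0]
  have hNC : (N : ℂ) ≠ 0 := Nat.cast_ne_zero.mpr hN0
  have h2piI : (2 : ℂ) * Real.pi * Complex.I ≠ 0 := by
    simp [Real.pi_ne_zero, Complex.I_ne_zero]
  -- q is odd
  have hqodd : Odd q := by
    rw [← Int.not_even_iff_odd]
    intro he
    have h2 : (2 : ℤ) ∣ (Int.gcd q (2 * s) : ℤ) := by
      exact Int.dvd_coe_gcd he.two_dvd ⟨(s : ℤ), by push_cast; ring⟩
    rw [hq] at h2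
    norm_num at h2
  set k : ℤ := c + s with hk
  set x : ℂ := Complex.exp (2 * Real.pi * Complex.I * (k : ℂ) / N) with hxdef
  -- rewrite the Gauss sum as a geometric sum
  have hsum : gaussSumG (2 * s) (q * s) c = ∑ n ∈ Finset.range N, x ^ n := by
    unfold gaussSumG
    refine Finset.sum_congr rfl fun n _ => ?_
    have hev : Even (q * (n : ℤ) ^ 2 - n) := by
      rcases Int.even_or_odd n with he | ho
      · have heq : q * (n : ℤ) ^ 2 - n = (n : ℤ) * (q * n - 1) := by ring
        rw [heq]
        exact he.mul_right _
      · exact (hqodd.mul (ho.pow)).sub_odd ho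
    obtain ⟨m, hm⟩ := hev
    have hxn : x ^ n = Complex.exp ((n : ℂ) * (2 * Real.pi * Complex.I * (k : ℂ) / N)) := by
      rw [hxdef, ← Complex.exp_nat_mul]
    rw [hxn]
    have hmC : (q : ℂ) * (n : ℂ) ^ 2 - n = 2 * m := by
      have : q * (n : ℤ) ^ 2 - n = 2 * m := by omega
      exact_mod_cast congrArg (Int.cast : ℤ → ℂ) this
    have hNs : (N : ℂ) = 2 * (s : ℂ) := by push_cast [hN]; ring
    have hsC : (s : ℂ) ≠ 0 := Nat.cast_ne_zero.mpr hs0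
    have harg : 2 * (Real.pi : ℂ) * Complex.I * (((q * s : ℤ) : ℂ) * (n : ℂ) ^ 2 + (c : ℂ) * n) / N
        = (n : ℂ) * (2 * Real.pi * Complex.I * (k : ℂ) / N) + (m : ℂ) * (2 * Real.pi * Complex.I) := by
      rw [hNs, hk]
      field_simp
      push_cast
      linear_combination (s : ℂ) * hmC
    rw [harg, Complex.exp_add]
    have h1 : Complex.exp ((m : ℂ) * (2 * Real.pi * Complex.I)) = 1 := by
      simpa using Complex.exp_int_mul_two_pi_mul_I m
    rw [h1, mul_one]
  have hxN : x ^ N = 1 := by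
    rw [hxdef, ← Complex.exp_nat_mul]
    have : (N : ℂ) * (2 * Real.pi * Complex.I * (k : ℂ) / N) = (k : ℤ) * (2 * Real.pi * Complex.I) := by
      field_simp
    rw [this, Complex.exp_int_mul_two_pi_mul_I]
  have hxone : x = 1 ↔ (N : ℤ) ∣ k := by
    constructor
    · intro h1
      rw [hxdef, Complex.exp_eq_one_iff] at h1
      obtain ⟨j, hj⟩ := h1
      refine ⟨j, ?_⟩
      have hC : (2 : ℂ) * Real.pi * Complex.I * (k : ℂ)
          = (2 : ℂ) * Real.pi * Complex.I * ((j : ℂ) * N) := by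
        field_simp at hj
        linear_combination (2 * (Real.pi : ℂ) * Complex.I) * hj
      have := mul_left_cancel₀ h2piI hC
      have : (k : ℂ) = ((N * j : ℤ) : ℂ) := by push_cast; linear_combination this
      exact_mod_cast this
    · rintro ⟨j, hj⟩
      rw [hxdef, hj]
      have : (2 : ℂ) * Real.pi * Complex.I * (((N : ℤ) * j : ℤ) : ℂ) / N
          = (j : ℤ) * (2 * Real.pi * Complex.I) := by
        push_cast
        field_simp
      rw [this, Complex.exp_int_mul_two_pi_mul_I]
  constructor
  · intro hc
    have hnd : ¬ (N : ℤ) ∣ k := by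
      intro hd
      have hsN : (s : ℤ) ∣ (N : ℤ) := ⟨2, by push_cast [hN]; ring⟩
      have hsk : (s : ℤ) ∣ k := hsN.trans hd
      have hsc : (s : ℤ) ∣ c := (Int.dvd_add_right ⟨1, by ring⟩).mp (by rwa [hk, add_comm] at hsk)
      have : (s : ℤ) ∣ (Int.gcd c s : ℤ) := Int.dvd_coe_gcd hsc dvd_rfl
      rw [hc] at this
      have := Int.le_of_dvd one_pos this
      have := hs.two_le
      omega
    have hx1 : x ≠ 1 := fun h => hnd (hxone.mp h)
    rw [hsum, geom_sum_eq hx1, hxN]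
    simp
  · intro hc
    have hd : (N : ℤ) ∣ k := by
      obtain ⟨j, hj⟩ := Int.ModEq.dvd hc
      exact ⟨1 - j, by push_cast [hk, hN]; linarith [hj]⟩
    have hx1 : x = 1 := hxone.mpr hd
    rw [hsum, hx1]
    simp [hN]
end

section
/- Let s be an odd prime and let θ be a primitive s-th root of unity. Then the ((s−1)/2) × ((s−1)/2) matrix with (j,d)-entry θ^((2j−1)d²) (for 1 ≤ j ≤ (s−1)/2 and d ranging over the odd numbers 1, 3, ..., s−2) is nonsingular, since the squares d² of distinct odd numbers 1 ≤ d ≤ s−2 are pairwise distinct modulo s. -/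
open Complex Matrix

theorem vandermonde_odd_sq_nonsingular (s : ℕ) (hs : s.Prime) (hso : Odd s)
    (θ : ℂ) (hθ : IsPrimitiveRoot θ s) :
    (∀ d₁ d₂ : ℕ, Odd d₁ → Odd d₂ → 1 ≤ d₁ → d₁ ≤ s - 2 → 1 ≤ d₂ → d₂ ≤ s - 2 →
      d₁ ^ 2 ≡ d₂ ^ 2 [MOD s] → d₁ = d₂) ∧
    (Matrix.of fun j d : Fin ((s - 1) / 2) =>
      θ ^ ((2 * (j.1 + 1) - 1) * (2 * d.1 + 1) ^ 2)).det ≠ 0 := by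
  have hs3 : 3 ≤ s := by
    have := hs.two_le
    rcases hso with ⟨k, hk⟩
    omega
  have part1 : ∀ d₁ d₂ : ℕ, Odd d₁ → Odd d₂ → 1 ≤ d₁ → d₁ ≤ s - 2 → 1 ≤ d₂ → d₂ ≤ s - 2 →
      d₁ ^ 2 ≡ d₂ ^ 2 [MOD s] → d₁ = d₂ := by
    intro d₁ d₂ ho₁ ho₂ h1 h2 h3 h4 hmod
    have hdvd : (s : ℤ) ∣ (d₂ : ℤ) ^ 2 - (d₁ : ℤ) ^ 2 := by
      have := (Nat.modEq_iff_dvd).mp hmod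
      push_cast at this ⊢
      exact this
    have hfac : (d₂ : ℤ) ^ 2 - (d₁ : ℤ) ^ 2 = ((d₂ : ℤ) - d₁) * ((d₂ : ℤ) + d₁) := by ring
    rw [hfac] at hdvd
    have hp : Prime (s : ℤ) := Nat.prime_iff_prime_int.mp hs
    rcases hp.dvd_mul.mp hdvd with h | h
    · -- s ∣ d₂ - d₁, and |d₂ - d₁| < s
      have hd : d₁ ≡ d₂ [MOD s] := (Nat.modEq_iff_dvd).mpr h
      exact Nat.ModEq.eq_of_lt_of_lt hd (by omega) (by omega)
    · -- s ∣ d₁ + d₂, which is even and in (0, 2s), so d₁ + d₂ = s, contradicting s odd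
      have hd : s ∣ d₂ + d₁ := by
        have := Int.natCast_dvd_natCast.mp h
        exact this
      have heq : d₂ + d₁ = s := Nat.eq_of_dvd_of_lt_two_mul (by omega) hd (by omega)
      rcases ho₁ with ⟨a, ha⟩
      rcases ho₂ with ⟨b, hb⟩
      rcases hso with ⟨c, hc⟩
      omega
  refine ⟨part1, ?_⟩
  set m := (s - 1) / 2 with hm
  set x : Fin m → ℂ := fun d => θ ^ ((2 * d.1 + 1) ^ 2) with hx
  have hθ0 : θ ≠ 0 := hθ.ne_zero (by omega)
  have hMeq : (Matrix.of fun j d : Fin m =>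
      θ ^ ((2 * (j.1 + 1) - 1) * (2 * d.1 + 1) ^ 2)) =
      (Matrix.of fun d j : Fin m => x d * (Matrix.vandermonde (fun d => x d ^ 2)) d j)ᵀ := by
    ext j d
    simp only [Matrix.of_apply, Matrix.transpose_apply, Matrix.vandermonde_apply, hx]
    have h1 : 2 * (j.1 + 1) - 1 = 2 * j.1 + 1 := by omega
    rw [← pow_mul, ← pow_mul, h1, ← pow_add]
    congr 1
    ring
  rw [hMeq, Matrix.det_transpose, Matrix.det_mul_column]
  have hinj : Function.Injective (fun d : Fin m => x d ^ 2) := by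
    intro d₁ d₂ hde
    simp only [hx] at hde
    rw [← pow_mul, ← pow_mul] at hde
    have key : ∀ a b : ℕ, θ ^ a = θ ^ b → a ≡ b [MOD s] := by
      intro a b h
      have red : ∀ c : ℕ, θ ^ c = θ ^ (c % s) := by
        intro c
        conv_lhs => rw [← Nat.div_add_mod c s]
        rw [pow_add, pow_mul, hθ.pow_eq_one, one_pow, one_mul]
      rw [red a, red b] at h
      exact hθ.pow_inj (Nat.mod_lt _ (by omega)) (Nat.mod_lt _ (by omega)) h
    have hmod := key _ _ hde
    have hcop : Nat.gcd s 2 = 1 := Nat.Coprime.gcd_eq_one (Nat.coprime_comm.mp (hso.coprime_two_left))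
    have hsq := Nat.ModEq.cancel_right_of_coprime hcop hmod
    have hd1 : d₁.1 < m := d₁.2
    have hd2 : d₂.1 < m := d₂.2
    rcases hso with ⟨c, hc⟩
    have := part1 (2 * d₁.1 + 1) (2 * d₂.1 + 1) ⟨d₁.1, by ring⟩ ⟨d₂.1, by ring⟩
      (by omega) (by omega) (by omega) (by omega) hsq
    exact Fin.ext (by omega)
  refine mul_ne_zero ?_ (Matrix.det_vandermonde_ne_zero_iff.mpr hinj)
  exact Finset.prod_ne_zero_iff.mpr fun d _ => pow_ne_zero _ hθ0
end

section
/- Let p ≥ 2, q coprime to p, and for 0 ≤ k < p define f_{p,q,c,k}(z) = (i(−1)^(c+1)/√(2p))·z^(12p·s(q,p)+q(c²+2c))·(G₊(p,q,c,k)·z^(2(c+1)) − G₋(p,q,c,k)·z^(−2(c+1))), where G_±(p,q,c,k) = Σ_{n=0}^{p-1} ξ_p^(qk n² + (qc+q±1)n) and s(q,p) is the Dedekind sum (assumed to make the exponent an integer times a fixed denominator; treat z as a formal variable allowing fractional powers as a root of unity ambient). Then f_{p,q,c,k}(z) = −conj(f_{p,q,c,p−k}(conj(z))) for |z| = 1,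 i.e., as functions on roots of unity. -/
open Complex Finset

/-- `G_±(p,q,c,k)` with sign `ε = ±1`. -/
noncomputable def Gpm (p : ℕ) (q c k ε : ℤ) : ℂ :=
  gaussSumG p (q * k) (q * c + q + ε)

/-- The sawtooth function `((x))`. -/
noncomputable def sawtooth (x : ℚ) : ℚ :=
  if x.den = 1 then 0 else x - ⌊x⌋ - 1 / 2

/-- The Dedekind sum `s(q,p) = Σ_{n=1}^{p-1} ((n/p)) ((qn/p))`. -/
noncomputable def dedekindS (q : ℤ) (p : ℕ) : ℚ :=
  ∑ n ∈ Finset.Ico 1 p, sawtooth ((n : ℚ) / p) * sawtooth ((q * n : ℚ) / p)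

/-- The Laurent polynomial `f_{p,q,c,k}` of the paper, evaluated at `z`, where `m`
is the integer `12 p s(q,p)`. -/
noncomputable def fpqck (p : ℕ) (q : ℤ) (c : ℕ) (k m : ℤ) (z : ℂ) : ℂ :=
  (Complex.I * (-1) ^ (c + 1) / (Real.sqrt (2 * p) : ℂ)) *
    z ^ (m + q * ((c : ℤ) ^ 2 + 2 * c)) *
    (Gpm p q c k 1 * z ^ (2 * ((c : ℤ) + 1)) -
      Gpm p q c k (-1) * z ^ (-(2 * ((c : ℤ) + 1))))

lemma exp_period (p : ℕ) (hp : 0 < p) (X Y : ℤ) (h : (X : ZMod p) = (Y : ZMod p)) :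
    Complex.exp (2 * Real.pi * Complex.I * (X : ℂ) / p) =
    Complex.exp (2 * Real.pi * Complex.I * (Y : ℂ) / p) := by
  have hdvd : (p : ℤ) ∣ X - Y := by
    rwa [← ZMod.intCast_zmod_eq_zero_iff_dvd, Int.cast_sub, sub_eq_zero]
  obtain ⟨t, ht⟩ := hdvd
  have hX : X = Y + p * t := by linarith
  have hp' : (p : ℂ) ≠ 0 := Nat.cast_ne_zero.mpr hp.ne'
  rw [hX]
  push_cast
  rw [show 2 * (Real.pi : ℂ) * Complex.I * ((Y : ℂ) + p * t) / p
      = 2 * Real.pi * Complex.I * (Y : ℂ) / p + (t : ℤ) * (2 * Real.pi * Complex.I) by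
    push_cast; field_simp]
  rw [Complex.exp_add, Complex.exp_int_mul_two_pi_mul_I, mul_one]

lemma gaussSumG_congr (p : ℕ) (hp : 0 < p) (a b a' b' : ℤ)
    (ha : (a : ZMod p) = a') (hb : (b : ZMod p) = b') :
    gaussSumG p a b = gaussSumG p a' b' := by
  unfold gaussSumG
  refine Finset.sum_congr rfl fun n _ => ?_
  have h1 : ((a : ℂ) * (n : ℂ) ^ 2 + (b : ℂ) * n) = ((a * n ^ 2 + b * n : ℤ) : ℂ) := by push_cast; ring
  have h2 : ((a' : ℂ) * (n : ℂ) ^ 2 + (b' : ℂ) * n) = ((a' * n ^ 2 + b' * n : ℤ) : ℂ) := by push_cast; ring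
  rw [h1, h2]
  apply exp_period p hp
  push_cast
  rw [ha, hb]

lemma gaussSumG_neg_b (p : ℕ) (a b : ℤ) : gaussSumG p a (-b) = gaussSumG p a b := by
  rcases Nat.eq_zero_or_pos p with hp | hp
  · simp [gaussSumG, hp]
  unfold gaussSumG
  refine Finset.sum_nbij' (fun n => (p - n) % p) (fun n => (p - n) % p) ?_ ?_ ?_ ?_ ?_
  · intro n hn; simp only [Finset.mem_range] at *; exact Nat.mod_lt _ hp
  · intro n hn; simp only [Finset.mem_range] at *; exact Nat.mod_lt _ hp
  · intro n hn; simp only [Finset.mem_range] at hn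
    show (p - (p - n) % p) % p = n
    rcases Nat.eq_zero_or_pos n with h0 | h0
    · subst h0; simp [Nat.mod_self]
    · have e1 : (p - n) % p = p - n := Nat.mod_eq_of_lt (by omega)
      rw [e1]
      have e2 : p - (p - n) = n := by omega
      rw [e2, Nat.mod_eq_of_lt hn]
  · intro n hn; simp only [Finset.mem_range] at hn
    show (p - (p - n) % p) % p = n
    rcases Nat.eq_zero_or_pos n with h0 | h0
    · subst h0; simp [Nat.mod_self]
    · have e1 : (p - n) % p = p - n := Nat.mod_eq_of_lt (by omega)
      rw [e1]
      have e2 : p - (p - n) = n := by omega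
      rw [e2, Nat.mod_eq_of_lt hn]
  · intro n hn
    simp only [Finset.mem_range] at hn
    show Complex.exp (2 * Real.pi * Complex.I *
          ((a : ℂ) * (n : ℂ) ^ 2 + ((-b : ℤ) : ℂ) * (n : ℂ)) / p)
        = Complex.exp (2 * Real.pi * Complex.I *
          ((a : ℂ) * (((p - n) % p : ℕ) : ℂ) ^ 2 + (b : ℂ) * (((p - n) % p : ℕ) : ℂ)) / p)
    set m : ℕ := (p - n) % p with hm
    have hmn : (m : ZMod p) = -(n : ZMod p) := by
      rw [hm]
      push_cast [Nat.cast_sub hn.le, ZMod.natCast_mod]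
      simp [ZMod.natCast_self]
    have h1 : ((a : ℂ) * (n : ℂ) ^ 2 + ((-b : ℤ) : ℂ) * (n : ℂ)) = ((a * n ^ 2 + (-b) * n : ℤ) : ℂ) := by push_cast; ring
    have h2 : ((a : ℂ) * (m : ℂ) ^ 2 + (b : ℂ) * (m : ℂ)) = ((a * m ^ 2 + b * m : ℤ) : ℂ) := by push_cast; ring
    rw [h1, h2]
    apply exp_period p hp
    push_cast
    rw [hmn]; ring

lemma gaussSumG_conj (p : ℕ) (a b : ℤ) :
    (starRingEnd ℂ) (gaussSumG p a b) = gaussSumG p (-a) (-b) := by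
  unfold gaussSumG
  rw [map_sum]
  refine Finset.sum_congr rfl fun n _ => ?_
  rw [← Complex.exp_conj]
  congr 1
  have : ((a : ℂ) * (n : ℂ) ^ 2 + (b : ℂ) * n) = (((a * n ^ 2 + b * n : ℤ) : ℝ) : ℂ) := by push_cast; ring
  rw [this]
  simp only [map_div₀, map_mul, Complex.conj_I, Complex.conj_ofReal, map_ofNat, map_natCast]
  push_cast
  try ring

lemma Gpm_conj (p : ℕ) (hp : 0 < p) (q c k ε : ℤ) :
    (starRingEnd ℂ) (Gpm p q c ((p : ℤ) - k) ε) = Gpm p q c k ε := by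
  unfold Gpm
  rw [gaussSumG_conj]
  rw [← gaussSumG_neg_b p (q * k) (q * c + q + ε)]
  apply gaussSumG_congr p hp
  · push_cast; simp [ZMod.natCast_self]; try ring
  · push_cast; ring

theorem fpqck_conj_symmetry (p : ℕ) (hp : 2 ≤ p) (q : ℤ) (hq : Int.gcd q p = 1)
    (c : ℕ) (k : ℤ) (hk0 : 0 ≤ k) (hkp : k < p)
    (m : ℤ) (hm : (m : ℚ) = 12 * p * dedekindS q p)
    (z : ℂ) (hz : ‖z‖ = 1) :
    fpqck p q c k m z =
      - (starRingEnd ℂ) (fpqck p q c ((p : ℤ) - k) m ((starRingEnd ℂ) z)) := by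
  have hp0 : 0 < p := by omega
  unfold fpqck
  simp only [map_mul, map_sub, map_div₀, map_zpow₀, map_pow, map_neg, map_one,
    Complex.conj_I, Complex.conj_ofReal, Complex.conj_conj, Gpm_conj p hp0]
  ring
end
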